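/- Let d ≥ 1 be an integer, γ ∈ (1/2,(d+2)/4), and c₀ = (2π)^{−d/2}. Suppose ρ : (ℝ^d \ {0}) × [0,∞) → ℝ is bounded and measurable and satisfies, for all ξ ≠ 0 and t ≥ 0, ρ(ξ,t) = e^{−|ξ|^{2γ}t} + ∫_0^t |ξ|^{2γ} e^{−|ξ|^{2γ}s} ∫_{ℝ^d} ρ(η,t−s) ρ(ξ−η,t−s) H(η|ξ) dη ds. Then the function v(ξ,t) = c₀^{−1} h(ξ) ρ(ξ,t) satisfies, for all ξ ≠ 0 and t ≥ 0, v(ξ,t) = e^{−|ξ|^{2γ}t} c₀^{−1} h(ξ) + c₀ ∫_0^t |ξ| e^{−|ξ|^{2γ}s} ∫_{ℝ^d} v(η,t−s) v(ξ−η,t−s) dη ds. In particular (taking ρ ≡ 1), the time-independent function v₁(ξ,t) = c₀^{−1} h(ξ) satisfies this mild fractional Montgomery–Smith equation with initial data c₀^{−1} h. -/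

import Mathlib

/-!
Since `h(η) h(ξ - η) = |ξ|^{2γ-1} h(ξ) H(η|ξ)`, multiplying the normalized equation by
`c₀⁻¹ h(ξ)` turns it into the mild equation, whatever `ρ` is. For `ρ ≡ 1` the normalized
equation reduces to `∫ H(η|ξ) dη = 1`, which is the Riesz composition formula
`∫ |η|^{a-d} |ξ-η|^{a-d} dη = π^{d/2} Γ(d/2-a) Γ(a/2)² / (Γ(a) Γ((d-a)/2)²) |ξ|^{2a-d}`
for `a = 2γ - 1`. To prove it, write `|x|^{a-d} = Γ(u)⁻¹ ∫₀^∞ t^{u-1} e^{-t|x|²} dt` with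
`u = (d-a)/2`, integrate out the product of Gaussians in `η`, substitute `s = t z` and recognise
a Gamma integral in `t` and a Beta integral in `z`.
-/

open MeasureTheory Set

/-- The constant `c_{d,γ}` of the standard majorizing kernel. -/
noncomputable def cdg (d : ℕ) (γ : ℝ) : ℝ :=
  Real.pi ^ (-(d : ℝ)/2) * Real.Gamma (2*γ - 1) * (Real.Gamma (((d : ℝ) + 1 - 2*γ)/2))^2 /
    (Real.Gamma (((d : ℝ) + 2 - 4*γ)/2) * (Real.Gamma ((2*γ - 1)/2))^2)

/-- The standard majorizing kernel `h(ξ) = c_{d,γ} |ξ|^{2γ-d-1}`. -/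
noncomputable def hker (d : ℕ) (γ : ℝ) (ξ : EuclideanSpace ℝ (Fin d)) : ℝ :=
  cdg d γ * ‖ξ‖ ^ (2*γ - (d : ℝ) - 1)

/-- `H(η|ξ) = c_{d,γ} |η|^{2γ−d−1} |ξ−η|^{2γ−d−1} |ξ|^{d+2−4γ}`. -/
noncomputable def Hker (d : ℕ) (γ : ℝ) (η ξ : EuclideanSpace ℝ (Fin d)) : ℝ :=
  cdg d γ * ‖η‖ ^ (2*γ - (d : ℝ) - 1) * ‖ξ - η‖ ^ (2*γ - (d : ℝ) - 1)
    * ‖ξ‖ ^ ((d : ℝ) + 2 - 4*γ)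

/-- The Fourier normalization constant `c₀ = (2π)^{−d/2}`. -/
noncomputable def c0 (d : ℕ) : ℝ := (2 * Real.pi) ^ (-(d : ℝ)/2)

open Real Module

theorem lintegral_rpow_mul_exp_neg_mul_Ioi {a r : ℝ} (ha : 0 < a) (hr : 0 < r) :
    ∫⁻ t in Ioi (0 : ℝ), ENNReal.ofReal (t ^ (a - 1) * exp (-(r * t))) =
      ENNReal.ofReal (r ^ (-a) * Gamma a) := by
  have hint : IntegrableOn (fun t : ℝ => t ^ (a - 1) * exp (-(r * t))) (Ioi 0) :=
    .of_integral_ne_zero (by rw [integral_rpow_mul_exp_neg_mul_Ioi ha hr]; positivity)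
  rw [rpow_neg hr.le, ← inv_rpow hr.le, ← one_div, ← integral_rpow_mul_exp_neg_mul_Ioi ha hr,
    ofReal_integral_eq_lintegral_ofReal hint]
  filter_upwards [ae_restrict_mem measurableSet_Ioi] with t (ht : 0 < t)
  positivity

theorem ofReal_Gamma_mul_rpow_eq_lintegral {u x : ℝ} (hu : 0 < u) (hx : 0 < x) :
    ENNReal.ofReal (Gamma u * x ^ (-(2 * u))) =
      ∫⁻ t in Ioi (0 : ℝ), ENNReal.ofReal (t ^ (u - 1) * exp (-(x ^ 2 * t))) := by
  rw [lintegral_rpow_mul_exp_neg_mul_Ioi hu (by positivity), ← rpow_natCast, ← rpow_mul hx.le,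
    mul_comm]
  push_cast
  ring_nf

theorem lintegral_Ioi_eq_lintegral_Ioi_comp_mul_left (f : ℝ → ENNReal) {c : ℝ} (hc : 0 < c) :
    ∫⁻ s in Ioi (0 : ℝ), f s = ∫⁻ z in Ioi (0 : ℝ), ENNReal.ofReal c * f (c * z) := by
  have h := lintegral_image_eq_lintegral_abs_deriv_mul (measurableSet_Ioi (a := (0 : ℝ)))
    (fun z _ => (hasDerivAt_id z).const_mul c |>.hasDerivWithinAt)
    (mul_right_injective₀ hc.ne').injOn f
  simpa [image_const_mul_Ioi_zero hc, abs_of_pos hc] using h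

theorem integral_mul_exp_neg_mul (l t : ℝ) :
    ∫ s in (0 : ℝ)..t, l * exp (-l * s) = 1 - exp (-l * t) := by
  have hderiv : ∀ s, HasDerivAt (fun s => -exp (-l * s)) (l * exp (-l * s)) s := fun s => by
    simpa [mul_comm] using ((hasDerivAt_id s).const_mul (-l)).exp.fun_neg
  rw [intervalIntegral.integral_deriv_eq_sub' _ (funext fun s => (hderiv s).deriv)
    (fun s _ => (hderiv s).differentiableAt) (by fun_prop)]
  simp
  ring

theorem lintegral_Ioi_rpow_mul_exp_neg_one_add_mul {α β w : ℝ} (hα : 0 < α) (hw : 0 < w) :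
    ∫⁻ z in Ioi (0 : ℝ), ENNReal.ofReal (z ^ (α - 1)) *
        ENNReal.ofReal (w ^ (α + β - 1) * exp (-((1 + z) * w))) =
      ENNReal.ofReal (Gamma α * (w ^ (β - 1) * exp (-(1 * w)))) := by
  have hsplit : ∀ z ∈ Ioi (0 : ℝ), ENNReal.ofReal (z ^ (α - 1)) *
      ENNReal.ofReal (w ^ (α + β - 1) * exp (-((1 + z) * w))) =
      ENNReal.ofReal (w ^ (α + β - 1) * exp (-w)) *
        ENNReal.ofReal (z ^ (α - 1) * exp (-(w * z))) := fun z (hz : 0 < z) => by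
    rw [← ENNReal.ofReal_mul (by positivity), ← ENNReal.ofReal_mul (by positivity),
      show -((1 + z) * w) = -w + -(w * z) by ring, exp_add]
    congr 1
    ring
  have hw_pow : w ^ (α + β - 1) * w ^ (-α) = w ^ (β - 1) := by
    rw [← rpow_add hw]
    ring_nf
  rw [setLIntegral_congr_fun measurableSet_Ioi hsplit,
    lintegral_const_mul' _ _ ENNReal.ofReal_ne_top, lintegral_rpow_mul_exp_neg_mul_Ioi hα hw,
    ← ENNReal.ofReal_mul (by positivity), one_mul, ← hw_pow]
  congr 1
  ring

theorem lintegral_rpow_mul_one_add_rpow_neg_Ioi {α β : ℝ} (hα : 0 < α) (hβ : 0 < β) :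
    ∫⁻ z in Ioi (0 : ℝ), ENNReal.ofReal (z ^ (α - 1) * (1 + z) ^ (-(α + β))) =
      ENNReal.ofReal (Gamma α * Gamma β / Gamma (α + β)) := by
  have hΓ : 0 < Gamma (α + β) := Gamma_pos_of_pos (add_pos hα hβ)
  rw [ENNReal.ofReal_div_of_pos hΓ, ENNReal.eq_div_iff (by positivity) ENNReal.ofReal_ne_top,
    ← lintegral_const_mul' _ _ ENNReal.ofReal_ne_top]
  calc ∫⁻ z in Ioi (0 : ℝ), ENNReal.ofReal (Gamma (α + β)) *
        ENNReal.ofReal (z ^ (α - 1) * (1 + z) ^ (-(α + β)))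
      = ∫⁻ z in Ioi (0 : ℝ), ∫⁻ w in Ioi (0 : ℝ), ENNReal.ofReal (z ^ (α - 1)) *
          ENNReal.ofReal (w ^ (α + β - 1) * exp (-((1 + z) * w))) := by
        refine setLIntegral_congr_fun measurableSet_Ioi fun z (hz : 0 < z) => ?_
        rw [lintegral_const_mul' _ _ ENNReal.ofReal_ne_top,
          lintegral_rpow_mul_exp_neg_mul_Ioi (add_pos hα hβ) (by positivity),
          ENNReal.ofReal_mul (by positivity), ENNReal.ofReal_mul (by positivity)]
        ring
    _ = ∫⁻ w in Ioi (0 : ℝ), ∫⁻ z in Ioi (0 : ℝ), ENNReal.ofReal (z ^ (α - 1)) *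
          ENNReal.ofReal (w ^ (α + β - 1) * exp (-((1 + z) * w))) :=
        lintegral_lintegral_swap (Measurable.aemeasurable (by fun_prop))
    _ = ∫⁻ w in Ioi (0 : ℝ), ENNReal.ofReal (Gamma α * (w ^ (β - 1) * exp (-(1 * w)))) :=
        setLIntegral_congr_fun measurableSet_Ioi fun w (hw : 0 < w) =>
          lintegral_Ioi_rpow_mul_exp_neg_one_add_mul hα hw
    _ = ENNReal.ofReal (Gamma α * Gamma β) := by
        simp_rw [ENNReal.ofReal_mul (Gamma_pos_of_pos hα).le]
        rw [lintegral_const_mul' _ _ ENNReal.ofReal_ne_top,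
          lintegral_rpow_mul_exp_neg_mul_Ioi hβ one_pos, one_rpow, one_mul]

theorem lintegral_Ioi_subordination_comp_mul {n a R t : ℝ} (ht : 0 < t) :
    ∫⁻ s in Ioi (0 : ℝ), ENNReal.ofReal (t ^ ((n - a) / 2 - 1) * s ^ ((n - a) / 2 - 1) *
        ((π / (t + s)) ^ (n / 2) * exp (-(t * s / (t + s) * R ^ 2)))) =
      ∫⁻ z in Ioi (0 : ℝ), ENNReal.ofReal (π ^ (n / 2) *
        (z ^ ((n - a) / 2 - 1) * (1 + z) ^ (-(n / 2))) *
          (t ^ (n / 2 - a - 1) * exp (-(z / (1 + z) * R ^ 2 * t)))) := by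
  rw [lintegral_Ioi_eq_lintegral_Ioi_comp_mul_left _ ht]
  refine setLIntegral_congr_fun measurableSet_Ioi fun z (hz : 0 < z) => ?_
  have h1z : 0 < 1 + z := by linarith
  have ht_pow : t ^ (n / 2 - a - 1) * t ^ (n / 2) =
      t * t ^ ((n - a) / 2 - 1) * t ^ ((n - a) / 2 - 1) := by
    rw [mul_comm t, ← rpow_add_one ht.ne', ← rpow_add ht, ← rpow_add ht]
    ring_nf
  rw [← ENNReal.ofReal_mul ht.le, show t + t * z = t * (1 + z) by ring,
    show t * (t * z) / (t * (1 + z)) * R ^ 2 = z / (1 + z) * R ^ 2 * t by field_simp,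
    mul_rpow ht.le hz.le, div_rpow pi_pos.le (by positivity), mul_rpow ht.le h1z.le,
    rpow_neg h1z.le, eq_div_of_mul_eq (by positivity) ht_pow]
  field_simp

theorem lintegral_Ioi_subordination_gamma {n a R z : ℝ} (han : a < n / 2) (hR : 0 < R)
    (hz : 0 < z) :
    ∫⁻ t in Ioi (0 : ℝ), ENNReal.ofReal (π ^ (n / 2) *
        (z ^ ((n - a) / 2 - 1) * (1 + z) ^ (-(n / 2))) *
          (t ^ (n / 2 - a - 1) * exp (-(z / (1 + z) * R ^ 2 * t)))) =
      ENNReal.ofReal (π ^ (n / 2) * Gamma (n / 2 - a) * R ^ (2 * a - n)) *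
        ENNReal.ofReal (z ^ (a / 2 - 1) * (1 + z) ^ (-(a / 2 + a / 2))) := by
  have h1z : 0 < 1 + z := by linarith
  have hR_pow : (R ^ 2) ^ (-(n / 2 - a)) = R ^ (2 * a - n) := by
    rw [← rpow_natCast, ← rpow_mul hR.le]
    push_cast
    ring_nf
  have hz_pow : z ^ ((n - a) / 2 - 1) * z ^ (-(n / 2 - a)) = z ^ (a / 2 - 1) := by
    rw [← rpow_add hz]
    ring_nf
  have h1z_pow : (1 + z) ^ (-(n / 2)) * (1 + z) ^ (n / 2 - a) = (1 + z) ^ (-(a / 2 + a / 2)) := by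
    rw [← rpow_add h1z]
    ring_nf
  simp_rw [ENNReal.ofReal_mul (by positivity : 0 ≤ π ^ (n / 2) *
    (z ^ ((n - a) / 2 - 1) * (1 + z) ^ (-(n / 2))))]
  rw [lintegral_const_mul' _ _ ENNReal.ofReal_ne_top,
    lintegral_rpow_mul_exp_neg_mul_Ioi (sub_pos.mpr han) (by positivity),
    ← ENNReal.ofReal_mul (by positivity), ← ENNReal.ofReal_mul (by positivity),
    mul_rpow (by positivity) (by positivity), div_rpow hz.le h1z.le, rpow_neg h1z.le (_ - _),
    div_inv_eq_mul, hR_pow, ← hz_pow, ← h1z_pow]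
  congr 1
  ring

/-- The `(t, s)`-integral left over from the Riesz composition formula once the Gaussians in
`η` have been integrated out. -/
theorem lintegral_Ioi_lintegral_Ioi_subordination {n a R : ℝ} (ha : 0 < a) (han : 2 * a < n)
    (hR : 0 < R) :
    ∫⁻ t in Ioi (0 : ℝ), ∫⁻ s in Ioi (0 : ℝ), ENNReal.ofReal (t ^ ((n - a) / 2 - 1) *
        s ^ ((n - a) / 2 - 1) * ((π / (t + s)) ^ (n / 2) * exp (-(t * s / (t + s) * R ^ 2)))) =
      ENNReal.ofReal (π ^ (n / 2) * Gamma (n / 2 - a) * R ^ (2 * a - n) *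
        (Gamma (a / 2) * Gamma (a / 2) / Gamma a)) := by
  have hb : a < n / 2 := by linarith
  have hΓ : 0 < Gamma (n / 2 - a) := Gamma_pos_of_pos (sub_pos.mpr hb)
  calc _ = ∫⁻ t in Ioi (0 : ℝ), ∫⁻ z in Ioi (0 : ℝ), ENNReal.ofReal (π ^ (n / 2) *
        (z ^ ((n - a) / 2 - 1) * (1 + z) ^ (-(n / 2))) *
          (t ^ (n / 2 - a - 1) * exp (-(z / (1 + z) * R ^ 2 * t)))) :=
        setLIntegral_congr_fun measurableSet_Ioi fun t (ht : 0 < t) =>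
          lintegral_Ioi_subordination_comp_mul ht
    _ = ∫⁻ z in Ioi (0 : ℝ), ∫⁻ t in Ioi (0 : ℝ), ENNReal.ofReal (π ^ (n / 2) *
        (z ^ ((n - a) / 2 - 1) * (1 + z) ^ (-(n / 2))) *
          (t ^ (n / 2 - a - 1) * exp (-(z / (1 + z) * R ^ 2 * t)))) :=
        lintegral_lintegral_swap (Measurable.aemeasurable (by fun_prop))
    _ = ∫⁻ z in Ioi (0 : ℝ), ENNReal.ofReal (π ^ (n / 2) * Gamma (n / 2 - a) * R ^ (2 * a - n)) *
        ENNReal.ofReal (z ^ (a / 2 - 1) * (1 + z) ^ (-(a / 2 + a / 2))) :=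
        setLIntegral_congr_fun measurableSet_Ioi fun z (hz : 0 < z) =>
          lintegral_Ioi_subordination_gamma hb hR hz
    _ = _ := by
        rw [lintegral_const_mul' _ _ ENNReal.ofReal_ne_top,
          lintegral_rpow_mul_one_add_rpow_neg_Ioi (by positivity) (by positivity),
          ← ENNReal.ofReal_mul (by positivity), add_halves]

section InnerProductSpace

variable {E : Type*} [NormedAddCommGroup E] [InnerProductSpace ℝ E]

theorem mul_sq_norm_add_mul_sq_norm_sub {t s : ℝ} (hts : 0 < t + s) (ξ η : E) :
    t * ‖η‖ ^ 2 + s * ‖ξ - η‖ ^ 2 =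
      (t + s) * ‖η - (s / (t + s)) • ξ‖ ^ 2 + t * s / (t + s) * ‖ξ‖ ^ 2 := by
  rw [norm_sub_sq_real ξ, norm_sub_sq_real η, norm_smul, real_inner_smul_right, real_inner_comm,
    mul_pow, Real.norm_eq_abs, sq_abs]
  field_simp
  ring

variable [FiniteDimensional ℝ E] [MeasurableSpace E] [BorelSpace E]

theorem integrable_exp_neg_mul_sq_norm {b : ℝ} (hb : 0 < b) :
    Integrable (fun v : E => exp (-b * ‖v‖ ^ 2)) := by
  have h := (GaussianFourier.integrable_cexp_neg_mul_sq_norm_add (V := E) (b := b)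
    (by simpa using hb) 0 0).norm
  convert h using 2 with v
  simp [Complex.norm_exp, ← Complex.ofReal_pow]

theorem lintegral_exp_neg_sq_norm_mul_mul_exp_neg_sq_norm_sub_mul {t s : ℝ} (ht : 0 < t)
    (hs : 0 < s) (ξ : E) :
    ∫⁻ η, ENNReal.ofReal (exp (-(‖η‖ ^ 2 * t))) * ENNReal.ofReal (exp (-(‖ξ - η‖ ^ 2 * s))) =
      ENNReal.ofReal ((π / (t + s)) ^ (finrank ℝ E / 2 : ℝ) *
        exp (-(t * s / (t + s) * ‖ξ‖ ^ 2))) := by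
  have hts : 0 < t + s := add_pos ht hs
  have hsplit : ∀ η : E, ENNReal.ofReal (exp (-(‖η‖ ^ 2 * t))) *
      ENNReal.ofReal (exp (-(‖ξ - η‖ ^ 2 * s))) =
      ENNReal.ofReal (exp (-(t + s) * ‖η - (s / (t + s)) • ξ‖ ^ 2)) *
        ENNReal.ofReal (exp (-(t * s / (t + s) * ‖ξ‖ ^ 2))) := fun η => by
    rw [← ENNReal.ofReal_mul (exp_pos _).le, ← ENNReal.ofReal_mul (exp_pos _).le, ← exp_add,
      ← exp_add, neg_mul, ← neg_add, ← neg_add, ← mul_sq_norm_add_mul_sq_norm_sub hts, mul_comm t,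
      mul_comm s]
  rw [lintegral_congr hsplit, lintegral_mul_const' _ _ ENNReal.ofReal_ne_top,
    lintegral_sub_right_eq_self (fun η => ENNReal.ofReal (exp (-(t + s) * ‖η‖ ^ 2))),
    ← ofReal_integral_eq_lintegral_ofReal (integrable_exp_neg_mul_sq_norm hts)
      (.of_forall fun _ => (exp_pos _).le),
    GaussianFourier.integral_rexp_neg_mul_sq_norm hts, ← ENNReal.ofReal_mul (by positivity)]

theorem lintegral_rpow_norm_mul_rpow_norm_sub_subordination {u : ℝ} (hu : 0 < u) {ξ : E}
    (hξ : ξ ≠ 0) :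
    ENNReal.ofReal (Gamma u * Gamma u) *
        ∫⁻ η, ENNReal.ofReal (‖η‖ ^ (-(2 * u)) * ‖ξ - η‖ ^ (-(2 * u))) =
      ∫⁻ t in Ioi (0 : ℝ), ∫⁻ s in Ioi (0 : ℝ), ENNReal.ofReal (t ^ (u - 1) * s ^ (u - 1) *
        ((π / (t + s)) ^ (finrank ℝ E / 2 : ℝ) * exp (-(t * s / (t + s) * ‖ξ‖ ^ 2)))) := by
  have : Nontrivial E := nontrivial_of_ne ξ 0 hξ
  set μ : Measure ℝ := volume.restrict (Ioi 0)
  rw [← lintegral_const_mul' _ _ ENNReal.ofReal_ne_top]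
  calc ∫⁻ η, ENNReal.ofReal (Gamma u * Gamma u) *
        ENNReal.ofReal (‖η‖ ^ (-(2 * u)) * ‖ξ - η‖ ^ (-(2 * u)))
      = ∫⁻ η, ∫⁻ q, ENNReal.ofReal (q.1 ^ (u - 1) * exp (-(‖η‖ ^ 2 * q.1))) *
          ENNReal.ofReal (q.2 ^ (u - 1) * exp (-(‖ξ - η‖ ^ 2 * q.2))) ∂μ.prod μ := by
        refine lintegral_congr_ae ?_
        -- at `η = 0` or `η = ξ` the Gamma integral is `∞`, whereas `0 ^ (-(2 * u)) = 0`
        filter_upwards [volume.ae_ne 0, volume.ae_ne ξ] with η hη0 hηξ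
        rw [← ENNReal.ofReal_mul (by positivity), mul_mul_mul_comm,
          ENNReal.ofReal_mul (by positivity),
          ofReal_Gamma_mul_rpow_eq_lintegral hu (norm_pos_iff.mpr hη0),
          ofReal_Gamma_mul_rpow_eq_lintegral hu (norm_pos_iff.mpr (sub_ne_zero.mpr hηξ.symm))]
        exact (lintegral_prod_mul (by fun_prop) (by fun_prop)).symm
    _ = ∫⁻ q, (∫⁻ η : E, ENNReal.ofReal (q.1 ^ (u - 1) * exp (-(‖η‖ ^ 2 * q.1))) *
          ENNReal.ofReal (q.2 ^ (u - 1) * exp (-(‖ξ - η‖ ^ 2 * q.2)))) ∂μ.prod μ :=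
        lintegral_lintegral_swap (Measurable.aemeasurable (by fun_prop))
    _ = ∫⁻ q, ENNReal.ofReal (q.1 ^ (u - 1) * q.2 ^ (u - 1) *
          ((π / (q.1 + q.2)) ^ (finrank ℝ E / 2 : ℝ) *
            exp (-(q.1 * q.2 / (q.1 + q.2) * ‖ξ‖ ^ 2)))) ∂μ.prod μ := by
        refine lintegral_congr_ae ?_
        have hpos : ∀ᵐ q ∂μ.prod μ, q ∈ Ioi (0 : ℝ) ×ˢ Ioi (0 : ℝ) := by
          rw [Measure.prod_restrict]
          exact ae_restrict_mem (measurableSet_Ioi.prod measurableSet_Ioi)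
        filter_upwards [hpos] with q ⟨(ht : 0 < q.1), (hs : 0 < q.2)⟩
        simp_rw [ENNReal.ofReal_mul (rpow_nonneg ht.le _), ENNReal.ofReal_mul (rpow_nonneg hs.le _),
          mul_mul_mul_comm (ENNReal.ofReal (q.1 ^ (u - 1)))]
        rw [lintegral_const_mul' _ _
            (ENNReal.mul_ne_top ENNReal.ofReal_ne_top ENNReal.ofReal_ne_top),
          lintegral_exp_neg_sq_norm_mul_mul_exp_neg_sq_norm_sub_mul ht hs,
          ← ENNReal.ofReal_mul (by positivity), ← ENNReal.ofReal_mul (by positivity)]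
    _ = _ := lintegral_prod _ (Measurable.aemeasurable (by fun_prop))

theorem integral_rpow_norm_mul_rpow_norm_sub {a : ℝ} (ha : 0 < a)
    (haE : 2 * a < finrank ℝ E) {ξ : E} (hξ : ξ ≠ 0) :
    ∫ η, ‖η‖ ^ (a - finrank ℝ E) * ‖ξ - η‖ ^ (a - finrank ℝ E) =
      π ^ (finrank ℝ E / 2 : ℝ) * Gamma (finrank ℝ E / 2 - a) * Gamma (a / 2) ^ 2 /
        (Gamma a * Gamma ((finrank ℝ E - a) / 2) ^ 2) * ‖ξ‖ ^ (2 * a - finrank ℝ E) := by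
  have hu : 0 < (finrank ℝ E - a) / 2 := by linarith
  have hΓu := Gamma_pos_of_pos hu
  have hΓa := Gamma_pos_of_pos ha
  have hΓa2 := Gamma_pos_of_pos (half_pos ha)
  have hΓb : 0 < Gamma (finrank ℝ E / 2 - a) := Gamma_pos_of_pos (by linarith)
  have key := lintegral_rpow_norm_mul_rpow_norm_sub_subordination hu hξ
  rw [lintegral_Ioi_lintegral_Ioi_subordination ha haE (norm_pos_iff.mpr hξ),
    ← ENNReal.eq_div_iff (by positivity) ENNReal.ofReal_ne_top,
    ← ENNReal.ofReal_div_of_pos (by positivity),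
    show -(2 * ((finrank ℝ E - a) / 2)) = a - finrank ℝ E by ring] at key
  rw [integral_eq_lintegral_of_nonneg_ae (.of_forall fun η => by positivity)
    (Measurable.aestronglyMeasurable (by fun_prop)), key, ENNReal.toReal_ofReal (by positivity)]
  field_simp

end InnerProductSpace

theorem c0_pos (d : ℕ) : 0 < c0 d := by
  unfold c0
  positivity

section Kernels

variable {d : ℕ} {γ : ℝ}

theorem hker_mul_hker_sub {ξ : EuclideanSpace ℝ (Fin d)} (hξ : ξ ≠ 0)
    (η : EuclideanSpace ℝ (Fin d)) :
    hker d γ η * hker d γ (ξ - η) = ‖ξ‖ ^ (2 * γ - 1) * hker d γ ξ * Hker d γ η ξ := by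
  have hξ_pow :
      ‖ξ‖ ^ (2 * γ - 1) * ‖ξ‖ ^ (2 * γ - d - 1) * ‖ξ‖ ^ ((d : ℝ) + 2 - 4 * γ) = 1 := by
    rw [← rpow_add (norm_pos_iff.mpr hξ), ← rpow_add (norm_pos_iff.mpr hξ)]
    ring_nf
    exact rpow_zero _
  unfold hker Hker
  linear_combination
    -(cdg d γ) ^ 2 * ‖η‖ ^ (2 * γ - d - 1) * ‖ξ - η‖ ^ (2 * γ - d - 1) * hξ_pow

theorem cdg_mul_riesz_constant_eq_one (hγ : γ ∈ Ioo (1 / 2 : ℝ) (((d : ℝ) + 2) / 4)) :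
    cdg d γ * (π ^ ((d : ℝ) / 2) * Gamma (((d : ℝ) + 2 - 4 * γ) / 2) *
      Gamma ((2 * γ - 1) / 2) ^ 2 / (Gamma (2 * γ - 1) * Gamma (((d : ℝ) + 1 - 2 * γ) / 2) ^ 2)) =
      1 := by
  obtain ⟨hγ₁, hγ₂⟩ := hγ
  have hΓ₁ : 0 < Gamma (2 * γ - 1) := Gamma_pos_of_pos (by linarith)
  have hΓ₂ : 0 < Gamma (((d : ℝ) + 1 - 2 * γ) / 2) := Gamma_pos_of_pos (by linarith)
  have hΓ₃ : 0 < Gamma (((d : ℝ) + 2 - 4 * γ) / 2) := Gamma_pos_of_pos (by linarith)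
  have hΓ₄ : 0 < Gamma ((2 * γ - 1) / 2) := Gamma_pos_of_pos (by linarith)
  have hπ : π ^ (-(d : ℝ) / 2) * π ^ ((d : ℝ) / 2) = 1 := by
    rw [← rpow_add pi_pos, neg_div, neg_add_cancel, rpow_zero]
  rw [cdg, div_mul_div_comm, div_eq_one_iff_eq (by positivity)]
  linear_combination Gamma (2 * γ - 1) * Gamma (((d : ℝ) + 1 - 2 * γ) / 2) ^ 2 *
    Gamma (((d : ℝ) + 2 - 4 * γ) / 2) * Gamma ((2 * γ - 1) / 2) ^ 2 * hπ

theorem integral_Hker_eq_one (hγ : γ ∈ Ioo (1 / 2 : ℝ) (((d : ℝ) + 2) / 4))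
    {ξ : EuclideanSpace ℝ (Fin d)} (hξ : ξ ≠ 0) :
    ∫ η, Hker d γ η ξ = 1 := by
  have hdim : (finrank ℝ (EuclideanSpace ℝ (Fin d)) : ℝ) = d := by simp
  have hriesz := integral_rpow_norm_mul_rpow_norm_sub (a := 2 * γ - 1) (by linarith [hγ.1])
    (by rw [hdim]; linarith [hγ.2]) hξ
  simp only [hdim, show 2 * γ - 1 - (d : ℝ) = 2 * γ - d - 1 by ring,
    show (d : ℝ) / 2 - (2 * γ - 1) = ((d : ℝ) + 2 - 4 * γ) / 2 by ring,
    show ((d : ℝ) - (2 * γ - 1)) / 2 = ((d : ℝ) + 1 - 2 * γ) / 2 by ring] at hriesz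
  have hsplit : ∀ η, Hker d γ η ξ = cdg d γ * ‖ξ‖ ^ ((d : ℝ) + 2 - 4 * γ) *
      (‖η‖ ^ (2 * γ - d - 1) * ‖ξ - η‖ ^ (2 * γ - d - 1)) := fun η => by
    unfold Hker
    ring
  have hξ_pow : ‖ξ‖ ^ ((d : ℝ) + 2 - 4 * γ) * ‖ξ‖ ^ (2 * (2 * γ - 1) - d) = 1 := by
    rw [← rpow_add (norm_pos_iff.mpr hξ)]
    ring_nf
    exact rpow_zero _
  rw [integral_congr_ae (.of_forall hsplit), integral_const_mul, hriesz, mul_mul_mul_comm, hξ_pow,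
    mul_one, cdg_mul_riesz_constant_eq_one hγ]

theorem mild_fms_of_normalized (ρ : EuclideanSpace ℝ (Fin d) → ℝ → ℝ)
    {ξ : EuclideanSpace ℝ (Fin d)} (hξ : ξ ≠ 0) {t : ℝ}
    (h : ρ ξ t = exp (-(‖ξ‖ ^ (2 * γ)) * t) +
      ∫ s in (0 : ℝ)..t, ‖ξ‖ ^ (2 * γ) * exp (-(‖ξ‖ ^ (2 * γ)) * s) *
        ∫ η, ρ η (t - s) * ρ (ξ - η) (t - s) * Hker d γ η ξ) :
    (c0 d)⁻¹ * hker d γ ξ * ρ ξ t =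
      exp (-(‖ξ‖ ^ (2 * γ)) * t) * ((c0 d)⁻¹ * hker d γ ξ) +
        c0 d * ∫ s in (0 : ℝ)..t, ‖ξ‖ * exp (-(‖ξ‖ ^ (2 * γ)) * s) *
          ∫ η, ((c0 d)⁻¹ * hker d γ η * ρ η (t - s)) *
            ((c0 d)⁻¹ * hker d γ (ξ - η) * ρ (ξ - η) (t - s)) := by
  have hc0 := (c0_pos d).ne'
  have hinner : ∀ s, ∫ η, ((c0 d)⁻¹ * hker d γ η * ρ η (t - s)) *
      ((c0 d)⁻¹ * hker d γ (ξ - η) * ρ (ξ - η) (t - s)) =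
      (c0 d)⁻¹ * (c0 d)⁻¹ * ‖ξ‖ ^ (2 * γ - 1) * hker d γ ξ *
        ∫ η, ρ η (t - s) * ρ (ξ - η) (t - s) * Hker d γ η ξ := fun s => by
    rw [← integral_const_mul]
    congr 1 with η
    linear_combination (c0 d)⁻¹ * (c0 d)⁻¹ * ρ η (t - s) * ρ (ξ - η) (t - s) *
      hker_mul_hker_sub hξ η
  have hξ_pow : ‖ξ‖ * ‖ξ‖ ^ (2 * γ - 1) = ‖ξ‖ ^ (2 * γ) := by
    rw [rpow_sub_one (norm_ne_zero_iff.mpr hξ)]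
    field_simp
  simp_rw [hinner]
  rw [h, mul_add, mul_comm _ (exp _), ← intervalIntegral.integral_const_mul,
    ← intervalIntegral.integral_const_mul]
  congr 1
  refine intervalIntegral.integral_congr fun s _ => ?_
  rw [← hξ_pow]
  field_simp

theorem normalized_const_one (hγ : γ ∈ Ioo (1 / 2 : ℝ) (((d : ℝ) + 2) / 4))
    {ξ : EuclideanSpace ℝ (Fin d)} (hξ : ξ ≠ 0) (t : ℝ) :
    (1 : ℝ) = exp (-(‖ξ‖ ^ (2 * γ)) * t) +
      ∫ s in (0 : ℝ)..t, ‖ξ‖ ^ (2 * γ) * exp (-(‖ξ‖ ^ (2 * γ)) * s) *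
        ∫ η, (1 : ℝ) * 1 * Hker d γ η ξ := by
  simp only [one_mul, integral_Hker_eq_one hγ hξ, mul_one, integral_mul_exp_neg_mul]
  ring

end Kernels

theorem stmt9_general (d : ℕ) (γ : ℝ)
    (hγ : γ ∈ Set.Ioo (1/2 : ℝ) (((d : ℝ) + 2)/4))
    (ρ : EuclideanSpace ℝ (Fin d) → ℝ → ℝ)
    (heq : ∀ ξ : EuclideanSpace ℝ (Fin d), ξ ≠ 0 → ∀ t : ℝ, 0 ≤ t →
      ρ ξ t = Real.exp (-(‖ξ‖ ^ (2*γ)) * t) +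
        ∫ s in (0:ℝ)..t, ‖ξ‖ ^ (2*γ) * Real.exp (-(‖ξ‖ ^ (2*γ)) * s) *
          ∫ η, ρ η (t - s) * ρ (ξ - η) (t - s) * Hker d γ η ξ) :
    (∀ ξ : EuclideanSpace ℝ (Fin d), ξ ≠ 0 → ∀ t : ℝ, 0 ≤ t →
      (c0 d)⁻¹ * hker d γ ξ * ρ ξ t =
        Real.exp (-(‖ξ‖ ^ (2*γ)) * t) * ((c0 d)⁻¹ * hker d γ ξ) +
          c0 d * ∫ s in (0:ℝ)..t, ‖ξ‖ * Real.exp (-(‖ξ‖ ^ (2*γ)) * s) *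
            ∫ η, ((c0 d)⁻¹ * hker d γ η * ρ η (t - s)) *
              ((c0 d)⁻¹ * hker d γ (ξ - η) * ρ (ξ - η) (t - s))) ∧
    (∀ ξ : EuclideanSpace ℝ (Fin d), ξ ≠ 0 → ∀ t : ℝ, 0 ≤ t →
      (c0 d)⁻¹ * hker d γ ξ =
        Real.exp (-(‖ξ‖ ^ (2*γ)) * t) * ((c0 d)⁻¹ * hker d γ ξ) +
          c0 d * ∫ s in (0:ℝ)..t, ‖ξ‖ * Real.exp (-(‖ξ‖ ^ (2*γ)) * s) *
            ∫ η, ((c0 d)⁻¹ * hker d γ η) * ((c0 d)⁻¹ * hker d γ (ξ - η))) := by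
  refine ⟨fun ξ hξ t ht => mild_fms_of_normalized ρ hξ (heq ξ hξ t ht), fun ξ hξ t _ => ?_⟩
  simpa using mild_fms_of_normalized (fun _ _ => (1 : ℝ)) hξ (normalized_const_one hγ hξ t)

theorem stmt9 (d : ℕ) (hd : 1 ≤ d) (γ : ℝ)
    (hγ : γ ∈ Set.Ioo (1/2 : ℝ) (((d : ℝ) + 2)/4))
    (ρ : EuclideanSpace ℝ (Fin d) → ℝ → ℝ)
    (hmeas : Measurable (Function.uncurry ρ))
    (hbdd : ∃ C : ℝ, ∀ ξ t, |ρ ξ t| ≤ C)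
    (heq : ∀ ξ : EuclideanSpace ℝ (Fin d), ξ ≠ 0 → ∀ t : ℝ, 0 ≤ t →
      ρ ξ t = Real.exp (-(‖ξ‖ ^ (2*γ)) * t) +
        ∫ s in (0:ℝ)..t, ‖ξ‖ ^ (2*γ) * Real.exp (-(‖ξ‖ ^ (2*γ)) * s) *
          ∫ η, ρ η (t - s) * ρ (ξ - η) (t - s) * Hker d γ η ξ) :
    (∀ ξ : EuclideanSpace ℝ (Fin d), ξ ≠ 0 → ∀ t : ℝ, 0 ≤ t →
      (c0 d)⁻¹ * hker d γ ξ * ρ ξ t =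
        Real.exp (-(‖ξ‖ ^ (2*γ)) * t) * ((c0 d)⁻¹ * hker d γ ξ) +
          c0 d * ∫ s in (0:ℝ)..t, ‖ξ‖ * Real.exp (-(‖ξ‖ ^ (2*γ)) * s) *
            ∫ η, ((c0 d)⁻¹ * hker d γ η * ρ η (t - s)) *
              ((c0 d)⁻¹ * hker d γ (ξ - η) * ρ (ξ - η) (t - s))) ∧
    (∀ ξ : EuclideanSpace ℝ (Fin d), ξ ≠ 0 → ∀ t : ℝ, 0 ≤ t →
      (c0 d)⁻¹ * hker d γ ξ =
        Real.exp (-(‖ξ‖ ^ (2*γ)) * t) * ((c0 d)⁻¹ * hker d γ ξ) +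
          c0 d * ∫ s in (0:ℝ)..t, ‖ξ‖ * Real.exp (-(‖ξ‖ ^ (2*γ)) * s) *
            ∫ η, ((c0 d)⁻¹ * hker d γ η) * ((c0 d)⁻¹ * hker d γ (ξ - η))) :=
  stmt9_general d γ hγ ρ heq
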